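/- Let T > 0, and let z₂ : [0,T] → ℝ be continuously differentiable and satisfy (1/2) d(z₂²)/dt = c(t) z₂(t)² on any interval where |z₂| ≥ R, where R > 0 with R ≥ |z₂(0)|, and suppose ∫_{t₁}^{t₂} c(t) dt ≤ C/R whenever |z₂(t)| ≥ R on [t₁,t₂] ⊆ [0,T], with C ≥ 0. Then |z₂(t)| ≤ e^{C/R} R for all t ∈ [0,T]. -/

import Mathlib

/-!
On a maximal interval `[t₁, t]` on which `|z₂| ≥ R` the equation `(z₂²)' = 2 c z₂²` integrates to
`z₂(t)² = z₂(t₁)² · exp (2 ∫_{t₁}^{t} c)`. Choosing `t₁` as the last time before `t` with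
`|z₂| ≤ R`, the factor `z₂(t₁)²` is at most `R²` and the integral is at most `C / R`.
-/

open Set Real

theorem eq_mul_exp_integral_of_hasDerivAt {y c : ℝ → ℝ} {a b : ℝ} (hab : a ≤ b)
    (hc : Continuous c) (hy : ∀ s ∈ Icc a b, HasDerivAt y (c s * y s) s) :
    y b = y a * exp (∫ s in a..b, c s) := by
  let I : ℝ → ℝ := fun s => ∫ u in a..s, c u
  have hI : ∀ s, HasDerivAt I (c s) s := fun s => (hc.integral_hasStrictDerivAt a s).hasDerivAt
  have hconst : ∀ s ∈ Icc a b, y s * exp (-I s) = y a * exp (-I a) := by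
    refine constant_of_has_deriv_right_zero
      (fun s hs => ((hy s hs).continuousAt.mul (hI s).continuousAt.neg.rexp).continuousWithinAt)
      fun s hs => ?_
    convert ((hy s ⟨hs.1, hs.2.le⟩).fun_mul ((hI s).fun_neg.exp)).hasDerivWithinAt using 1
    ring
  have hb : y b * exp (-I b) = y a := by
    simpa [I] using hconst b ⟨hab, le_rfl⟩
  rw [← hb, mul_assoc, ← exp_add, neg_add_cancel, exp_zero, mul_one]

theorem Continuous.exists_le_and_forall_Icc_ge {g : ℝ → ℝ} (hg : Continuous g) {a t R : ℝ}
    (hat : a ≤ t) (ha : g a ≤ R) (ht : R < g t) :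
    ∃ t₁ ∈ Icc a t, g t₁ ≤ R ∧ ∀ s ∈ Icc t₁ t, R ≤ g s := by
  set S := Icc a t ∩ {s | g s ≤ R}
  have hS : IsClosed S := isClosed_Icc.inter (isClosed_le hg continuous_const)
  have hbdd : BddAbove S := ⟨t, fun s hs => hs.1.2⟩
  obtain ⟨⟨hat₁, ht₁t⟩, ht₁⟩ : sSup S ∈ S := hS.csSup_mem ⟨a, ⟨le_rfl, hat⟩, ha⟩ hbdd
  refine ⟨sSup S, ⟨hat₁, ht₁t⟩, ht₁, ?_⟩
  have hne : sSup S ≠ t := fun h => (h ▸ ht₁).not_gt ht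
  have hafter : Ioc (sSup S) t ⊆ {s | R ≤ g s} := fun s hs => show R ≤ g s from
    le_of_not_gt fun h => hs.1.not_ge (le_csSup hbdd ⟨⟨hat₁.trans hs.1.le, hs.2⟩, h.le⟩)
  rw [← closure_Ioc hne]
  exact (isClosed_le continuous_const hg).closure_subset_iff.2 hafter

theorem stmt17_general (T R C : ℝ) (hC : 0 ≤ C)
    (z₂ c : ℝ → ℝ) (hz : ContDiff ℝ 1 z₂) (hc : Continuous c)
    (hR0 : |z₂ 0| ≤ R)
    (hderiv : ∀ t ∈ Set.Icc (0:ℝ) T, R ≤ |z₂ t| →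
      HasDerivAt (fun s => z₂ s ^ 2) (2 * c t * z₂ t ^ 2) t)
    (hint : ∀ t₁ t₂ : ℝ, 0 ≤ t₁ → t₁ ≤ t₂ → t₂ ≤ T →
      (∀ t ∈ Set.Icc t₁ t₂, R ≤ |z₂ t|) → ∫ t in t₁..t₂, c t ≤ C / R) :
    ∀ t ∈ Set.Icc (0:ℝ) T, |z₂ t| ≤ Real.exp (C / R) * R := by
  intro t ⟨ht0, htT⟩
  have hR : 0 ≤ R := (abs_nonneg _).trans hR0
  rcases le_or_gt |z₂ t| R with hle | hgt
  · exact hle.trans (le_mul_of_one_le_left hR (one_le_exp (div_nonneg hC hR)))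
  obtain ⟨t₁, ⟨ht₁0, ht₁t⟩, ht₁R, hlarge⟩ :=
    hz.continuous.abs.exists_le_and_forall_Icc_ge ht0 hR0 hgt
  have hintegral := hint t₁ t ht₁0 ht₁t htT hlarge
  refine abs_le_of_sq_le_sq ?_ (by positivity)
  calc z₂ t ^ 2 = z₂ t₁ ^ 2 * exp (2 * ∫ s in t₁..t, c s) := by
        rw [← intervalIntegral.integral_const_mul]
        exact eq_mul_exp_integral_of_hasDerivAt ht₁t (continuous_const.mul hc) fun s hs =>
          hderiv s ⟨ht₁0.trans hs.1, hs.2.trans htT⟩ (hlarge s hs)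
    _ ≤ R ^ 2 * exp (C / R) ^ 2 := by
        rw [← exp_nat_mul, ← sq_abs]
        gcongr ?_ ^ 2 * exp ?_
        push_cast
        linarith
    _ = (exp (C / R) * R) ^ 2 := by ring

theorem stmt17 (T R C : ℝ) (hT : 0 < T) (hR : 0 < R) (hC : 0 ≤ C)
    (z₂ c : ℝ → ℝ) (hz : ContDiff ℝ 1 z₂) (hc : Continuous c)
    (hR0 : |z₂ 0| ≤ R)
    (hderiv : ∀ t ∈ Set.Icc (0:ℝ) T, R ≤ |z₂ t| →
      HasDerivAt (fun s => z₂ s ^ 2) (2 * c t * z₂ t ^ 2) t)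
    (hint : ∀ t₁ t₂ : ℝ, 0 ≤ t₁ → t₁ ≤ t₂ → t₂ ≤ T →
      (∀ t ∈ Set.Icc t₁ t₂, R ≤ |z₂ t|) → ∫ t in t₁..t₂, c t ≤ C / R) :
    ∀ t ∈ Set.Icc (0:ℝ) T, |z₂ t| ≤ Real.exp (C / R) * R :=
  stmt17_general T R C hC z₂ c hz hc hR0 hderiv hint
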